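/- Let L be a subdirectly irreducible pk-algebra, let a ∈ L, and let Q be a prime filter of L with a ∧ a' ∈ Q. Then Q is a maximal prime filter, or Q belongs to Body(L) and φ(Q) ⊆ Q. -/

import Mathlib

/-- A pseudocomplemented De Morgan algebra (pm-algebra): a bounded distributive
lattice with a De Morgan involution `dm` and a pseudocomplement `pc`. -/
class PMAlgebra (L : Type*) extends DistribLattice L, BoundedOrder L where
  dm : L → L
  pc : L → L
  dm_dm : ∀ a : L, dm (dm a) = a
  dm_inf : ∀ a b : L, dm (a ⊓ b) = dm a ⊔ dm b
  pc_iff : ∀ a b : L, a ⊓ b = ⊥ ↔ b ≤ pc a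

namespace PMAlgebra

variable {L : Type*} [PMAlgebra L]

/-- A congruence of a pm-algebra. -/
def IsCongruence (θ : L → L → Prop) : Prop :=
  Equivalence θ ∧
  (∀ a b c d : L, θ a b → θ c d → θ (a ⊓ c) (b ⊓ d)) ∧
  (∀ a b c d : L, θ a b → θ c d → θ (a ⊔ c) (b ⊔ d)) ∧
  (∀ a b : L, θ a b → θ (dm a) (dm b)) ∧
  (∀ a b : L, θ a b → θ (pc a) (pc b))

/-- `L` is simple: it has more than one element and its only congruences are
equality and the total relation. -/
def Simple (L : Type*) [PMAlgebra L] : Prop :=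
  Nontrivial L ∧ ∀ θ : L → L → Prop, IsCongruence θ →
    θ = (fun a b => a = b) ∨ θ = (fun _ _ => True)

/-- `L` is subdirectly irreducible: there is a congruence `μ ≠ Eq` contained in
every congruence different from equality. -/
def SubdirectlyIrreducible (L : Type*) [PMAlgebra L] : Prop :=
  ∃ μ : L → L → Prop, IsCongruence μ ∧ μ ≠ (fun a b => a = b) ∧
    ∀ θ : L → L → Prop, IsCongruence θ → θ ≠ (fun a b => a = b) →
      ∀ a b : L, μ a b → θ a b

/-- A prime filter of the underlying lattice of `L`. -/
def IsPrimeFilter (P : Set L) : Prop :=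
  P.Nonempty ∧ P ≠ Set.univ ∧
  (∀ a b : L, a ∈ P → a ≤ b → b ∈ P) ∧
  (∀ a b : L, a ∈ P → b ∈ P → a ⊓ b ∈ P) ∧
  (∀ a b : L, a ⊔ b ∈ P → a ∈ P ∨ b ∈ P)

/-- The Birula–Rasiowa transformation. -/
def phi (P : Set L) : Set L := {a : L | dm a ∉ P}

/-- `P` is a maximal prime filter. -/
def IsMaximalPF (P : Set L) : Prop :=
  IsPrimeFilter P ∧ ∀ Q : Set L, IsPrimeFilter Q → P ⊆ Q → Q = P

/-- `P` is a minimal prime filter. -/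
def IsMinimalPF (P : Set L) : Prop :=
  IsPrimeFilter P ∧ ∀ Q : Set L, IsPrimeFilter Q → Q ⊆ P → Q = P

/-- The body of `L`: prime filters that are neither maximal nor minimal. -/
def body (L : Type*) [PMAlgebra L] : Set (Set L) :=
  {P : Set L | IsPrimeFilter P ∧ ¬ IsMaximalPF P ∧ ¬ IsMinimalPF P}

/-- The prime filter space of `L` is φ-connected. -/
def PhiConnected (L : Type*) [PMAlgebra L] : Prop :=
  ∀ S : Set (Set L), S ⊆ {P : Set L | IsPrimeFilter P} → S.Nonempty →
    (∀ P Q : Set L, P ∈ S → IsPrimeFilter Q → P ⊆ Q → Q ∈ S) →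
    (∀ P Q : Set L, P ∈ S → IsPrimeFilter Q → Q ⊆ P → Q ∈ S) →
    (∀ P : Set L, P ∈ S → phi P ∈ S) →
    S = {P : Set L | IsPrimeFilter P}

/-- The Kleene identity. -/
def Kleene (L : Type*) [PMAlgebra L] : Prop :=
  ∀ a b : L, a ⊓ dm a ≤ b ⊔ dm b

/-- The term `C(x) = (x ∧ x') ∨ (x ∧ x')*`. -/
def C (x : L) : L := (x ⊓ dm x) ⊔ pc (x ⊓ dm x)

/-- The term `T(x) = C(x) ∧ C(x)'`. -/
def T (x : L) : L := C x ⊓ dm (C x)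

end PMAlgebra

open PMAlgebra

namespace PMAlgebra

variable {L : Type*} [PMAlgebra L]

theorem dm_antitone : Antitone (dm : L → L) := fun a b h => by
  rw [← inf_eq_left.mpr h, dm_inf]
  exact le_sup_right

theorem dm_sup (a b : L) : dm (a ⊔ b) = dm a ⊓ dm b := by
  rw [← dm_dm (dm a ⊓ dm b), dm_inf, dm_dm, dm_dm]

theorem dm_top : (dm ⊤ : L) = ⊥ :=
  le_bot_iff.mp (dm_dm (⊥ : L) ▸ dm_antitone le_top)

theorem dm_bot : (dm ⊥ : L) = ⊤ := by
  rw [← dm_top, dm_dm]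

theorem phi_phi (P : Set L) : phi (phi P) = P := by
  ext x
  simp only [phi, Set.mem_ofPred_eq, not_not, dm_dm]

theorem phi_subset_phi {P R : Set L} (h : P ⊆ R) : phi R ⊆ phi P :=
  fun _ hx hP => hx (h hP)

namespace IsPrimeFilter

variable {P : Set L}

theorem top_mem (hP : IsPrimeFilter P) : (⊤ : L) ∈ P :=
  let ⟨x, hx⟩ := hP.1
  hP.2.2.1 x ⊤ hx le_top

theorem bot_notMem (hP : IsPrimeFilter P) : (⊥ : L) ∉ P := fun h =>
  hP.2.1 (Set.eq_univ_of_forall fun x => hP.2.2.1 ⊥ x h bot_le)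

theorem phi (hP : IsPrimeFilter P) : IsPrimeFilter (phi P) := by
  obtain ⟨-, -, hup, hinf, hprime⟩ := id hP
  refine ⟨⟨⊤, ?_⟩, fun h => ?_, ?_, ?_, ?_⟩
  · show dm ⊤ ∉ P
    exact dm_top (L := L) ▸ hP.bot_notMem
  · have hbot : dm (⊥ : L) ∉ P := (h ▸ Set.mem_univ ⊥ : (⊥ : L) ∈ PMAlgebra.phi P)
    exact hbot (dm_bot (L := L) ▸ hP.top_mem)
  · exact fun x y hx hxy h => hx (hup _ _ h (dm_antitone hxy))
  · intro x y hx hy h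
    rw [dm_inf] at h
    exact (hprime _ _ h).elim hx hy
  · intro x y hxy
    by_contra! hc
    simp only [PMAlgebra.phi, Set.mem_ofPred_eq, not_not] at hc
    exact hxy (dm_sup x y ▸ hinf _ _ hc.1 hc.2)

theorem phi_subset_of_inf_dm_mem (hk : Kleene L) (hP : IsPrimeFilter P) {a : L}
    (ha : a ⊓ dm a ∈ P) : PMAlgebra.phi P ⊆ P := fun x hx =>
  (hP.2.2.2.2 x (dm x) (hP.2.2.1 _ _ ha (hk a x))).resolve_right hx

end IsPrimeFilter

/-- Minimality forces `φ(Q) = Q`, and then `φ(R) = Q` for every prime `R ⊇ Q`, so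
`R = φ(φ(R)) = Q`. -/
theorem IsMinimalPF.isMaximalPF_of_phi_subset {Q : Set L} (hmin : IsMinimalPF Q)
    (hphi : phi Q ⊆ Q) : IsMaximalPF Q := by
  have hfix : phi Q = Q := hmin.2 _ hmin.1.phi hphi
  refine ⟨hmin.1, fun R hR hQR => ?_⟩
  have hR_phi : phi R = Q := hmin.2 _ hR.phi (hfix ▸ phi_subset_phi hQR)
  rw [← phi_phi R, hR_phi, hfix]

end PMAlgebra

theorem mem_max_or_body_of_inf_dm_mem_general {L : Type*} [PMAlgebra L]
    (hk : Kleene L)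
    (a : L) (Q : Set L) (hQ : IsPrimeFilter Q) (ha : a ⊓ dm a ∈ Q) :
    IsMaximalPF Q ∨ (Q ∈ body L ∧ phi Q ⊆ Q) := by
  have hphi : phi Q ⊆ Q := hQ.phi_subset_of_inf_dm_mem hk ha
  by_cases hmax : IsMaximalPF Q
  · exact Or.inl hmax
  · exact Or.inr ⟨⟨hQ, hmax, fun hmin => hmax (hmin.isMaximalPF_of_phi_subset hphi)⟩, hphi⟩

/-- In a subdirectly irreducible pk-algebra, a prime filter containing `a ⊓ a'`
is maximal, or lies in the body with `φ(Q) ⊆ Q`. -/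
theorem mem_max_or_body_of_inf_dm_mem {L : Type*} [PMAlgebra L]
    (hk : Kleene L) (hsi : SubdirectlyIrreducible L)
    (a : L) (Q : Set L) (hQ : IsPrimeFilter Q) (ha : a ⊓ dm a ∈ Q) :
    IsMaximalPF Q ∨ (Q ∈ body L ∧ phi Q ⊆ Q) :=
  mem_max_or_body_of_inf_dm_mem_general hk a Q hQ ha
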